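/- arXiv:0911.3719 — 5 statements merged into one kernel-verified Lean document; each statement's English description precedes it below -/
import Mathlib

section
/- Let C = kX be the coalgebra freely spanned by a set X of grouplike elements (Δ(x) = x ⊗ x, ε(x) = 1 for x ∈ X). Then the free commutative Hopf algebra S(t_C)_Θ generated by C is isomorphic as a Hopf algebra to the group algebra k[ℤ^(X)] of the free abelian group on X. -/
open TensorProduct

noncomputable section

variable (k : Type) [Field k]

/-- Convolution product of two linear maps from a coalgebra to an algebra. -/
def conv {C A : Type} [AddCommGroup C] [Module k C] [Coalgebra k C]
    [Ring A] [Algebra k A] (f g : C →ₗ[k] A) : C →ₗ[k] A :=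
  LinearMap.mul' k A ∘ₗ TensorProduct.map f g ∘ₗ Coalgebra.comul

/-- Unit of the convolution algebra: `unit ∘ counit`. -/
def convOne {C A : Type} [AddCommGroup C] [Module k C] [Coalgebra k C]
    [Ring A] [Algebra k A] : C →ₗ[k] A :=
  Algebra.linearMap k A ∘ₗ Coalgebra.counit

section CocycleDefs

variable {H : Type} [Ring H] [HopfAlgebra k H]

/-- The two-cocycle condition `β(x₁,y₁) β(x₂y₂,z) = β(y₁,z₁) β(x,y₂z₂)` for an `A`-valued
bilinear form `β` on `H`, as an equality of linear maps on `(H ⊗ H) ⊗ H`. -/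
def IsCocycle {A : Type} [CommRing A] [Algebra k A] (β : H ⊗[k] H →ₗ[k] A) : Prop :=
  conv k (LinearMap.mul' k A ∘ₗ TensorProduct.map β (convOne k))
      (β ∘ₗ TensorProduct.map (LinearMap.mul' k H) LinearMap.id)
  = conv k
      (LinearMap.mul' k A ∘ₗ TensorProduct.map (convOne k) β
        ∘ₗ (TensorProduct.assoc k H H H).toLinearMap)
      (β ∘ₗ TensorProduct.map LinearMap.id (LinearMap.mul' k H)
        ∘ₗ (TensorProduct.assoc k H H H).toLinearMap)

/-- `β` and `βinv` are mutually inverse for the convolution product. -/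
def IsConvInverse {A : Type} [CommRing A] [Algebra k A]
    (β βinv : H ⊗[k] H →ₗ[k] A) : Prop :=
  conv k β βinv = convOne k ∧ conv k βinv β = convOne k

end CocycleDefs

variable (C : Type) [AddCommGroup C] [Module k C] [Coalgebra k C]

/-- A model of Takeuchi's free commutative Hopf algebra `S(t_C)_Θ` generated by the
coalgebra `C`, together with its generators `t_x` and `t⁻¹_x`. -/
structure TakData (T : Type) [CommRing T] [HopfAlgebra k T] where
  t : C →ₗ[k] T
  tinv : C →ₗ[k] T
  comul_t : Coalgebra.comul ∘ₗ t = TensorProduct.map t t ∘ₗ Coalgebra.comul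
  counit_t : Coalgebra.counit ∘ₗ t = Coalgebra.counit
  comul_tinv : Coalgebra.comul ∘ₗ tinv
    = TensorProduct.map tinv tinv ∘ₗ (TensorProduct.comm k C C).toLinearMap ∘ₗ Coalgebra.comul
  counit_tinv : Coalgebra.counit ∘ₗ tinv = Coalgebra.counit
  conv_t_tinv : conv k t tinv = convOne k
  conv_tinv_t : conv k tinv t = convOne k
  antipode_t : HopfAlgebra.antipode (R := k) ∘ₗ t = tinv
  antipode_tinv : HopfAlgebra.antipode (R := k) ∘ₗ tinv = t
  adjoin_eq_top : Algebra.adjoin k (Set.range ⇑t ∪ Set.range ⇑tinv) = ⊤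

namespace TakData

variable {k C} {H : Type} [Ring H] [HopfAlgebra k H]
variable {T : Type} [CommRing T] [HopfAlgebra k T] (D : TakData k H T)

/-- `x ⊗ y ↦ t_x t_y`. -/
def tt : H ⊗[k] H →ₗ[k] T := LinearMap.mul' k T ∘ₗ TensorProduct.map D.t D.t

/-- `x ⊗ y ↦ t⁻¹_{xy}`. -/
def tinvMul : H ⊗[k] H →ₗ[k] T := D.tinv ∘ₗ LinearMap.mul' k H

/-- `x ⊗ y ↦ t_{xy}`. -/
def tMul : H ⊗[k] H →ₗ[k] T := D.t ∘ₗ LinearMap.mul' k H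

/-- `x ⊗ y ↦ t⁻¹_x t⁻¹_y`. -/
def tinvtinv : H ⊗[k] H →ₗ[k] T := LinearMap.mul' k T ∘ₗ TensorProduct.map D.tinv D.tinv

/-- The generic cocycle for the trivial cocycle: `σ(x,y) = t_{x₁} t_{y₁} t⁻¹_{x₂y₂}`. -/
def sigmaEps : H ⊗[k] H →ₗ[k] T := conv k D.tt D.tinvMul

/-- Its convolution inverse: `σ⁻¹(x,y) = t_{x₁y₁} t⁻¹_{x₂} t⁻¹_{y₂}`. -/
def sigmaEpsInv : H ⊗[k] H →ₗ[k] T := conv k D.tMul D.tinvtinv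

/-- The generic cocycle attached to `α`: `σ_α(x,y) = t_{x₁} t_{y₁} α(x₂,y₂) t⁻¹_{x₃y₃}`. -/
def sigma (α : H ⊗[k] H →ₗ[k] k) : H ⊗[k] H →ₗ[k] T :=
  conv k (conv k D.tt (Algebra.linearMap k T ∘ₗ α)) D.tinvMul

/-- The inverse generic cocycle: `σ_α⁻¹(x,y) = t_{x₁y₁} α⁻¹(x₂,y₂) t⁻¹_{x₃} t⁻¹_{y₃}`. -/
def sigmaInv (αinv : H ⊗[k] H →ₗ[k] k) : H ⊗[k] H →ₗ[k] T :=
  conv k (conv k D.tMul (Algebra.linearMap k T ∘ₗ αinv)) D.tinvtinv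

/-- The generic base algebra `B_H^α`: the subalgebra of `S(t_H)_Θ` generated by the values
of the generic cocycle `σ_α` and of its inverse. -/
def genBase (α αinv : H ⊗[k] H →ₗ[k] k) : Subalgebra k T :=
  Algebra.adjoin k
    (Set.range (fun p : H × H => D.sigma α (p.1 ⊗ₜ[k] p.2)) ∪
      Set.range (fun p : H × H => D.sigmaInv αinv (p.1 ⊗ₜ[k] p.2)))

/-- The generic base algebra `B_H` for the trivial cocycle. -/
def B : Subalgebra k T :=
  Algebra.adjoin k
    (Set.range (fun p : H × H => D.sigmaEps (p.1 ⊗ₜ[k] p.2)) ∪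
      Set.range (fun p : H × H => D.sigmaEpsInv (p.1 ⊗ₜ[k] p.2)))

end TakData

section Stmt4

variable (X : Type)

/-- The free abelian group on `X`, written multiplicatively. -/
abbrev FreeAb := Multiplicative (X →₀ ℤ)

/-- The comultiplication of the group algebra `k[ℤ^(X)]`, making every group element
grouplike. -/
def comulG : MonoidAlgebra k (FreeAb X) →ₗ[k]
    MonoidAlgebra k (FreeAb X) ⊗[k] MonoidAlgebra k (FreeAb X) :=
  (Finsupp.lsum k fun g => LinearMap.toSpanSingleton k _
    ((MonoidAlgebra.single g (1 : k)) ⊗ₜ[k] (MonoidAlgebra.single g (1 : k))))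
    ∘ₗ (MonoidAlgebra.coeffLinearEquiv k).toLinearMap

/-- The counit of the group algebra `k[ℤ^(X)]`. -/
def counitG : MonoidAlgebra k (FreeAb X) →ₗ[k] k :=
  Finsupp.lsum k (fun (_ : FreeAb X) => (LinearMap.id : k →ₗ[k] k))
    ∘ₗ (MonoidAlgebra.coeffLinearEquiv k).toLinearMap

/-! The grouplike generators `t_x` of `T` are invertible, with inverses `t⁻¹_x`, so `x ↦ t_x`
extends to an algebra map `G : k[ℤ^(X)] → T`. Conversely, sending `x` to the basis vector `e_x`
of `ℤ^(X)` is a coalgebra map from `kX` to the group algebra, which the universal property of `T`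
extends to a bialgebra map `F : T → k[ℤ^(X)]`. Both composites fix the generators `t_x`,
resp. `e_x`; the `e_x` generate `ℤ^(X)`, and the `t_x` generate `T` together with their inverses,
so `F` and `G` are mutually inverse. -/

section Grouplike

variable {R : Type*} [CommSemiring R] {ι A : Type*}

lemma Finsupp.isGroupLikeElem_single_one (i : ι) :
    IsGroupLikeElem R (Finsupp.single i (1 : R)) := by
  constructor <;> simp

variable [AddCommMonoid A] [Module R A] [Coalgebra R A] {v : ι → A}

lemma Finsupp.comul_comp_linearCombination (hv : ∀ i, IsGroupLikeElem R (v i)) :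
    Coalgebra.comul ∘ₗ Finsupp.linearCombination R v
      = TensorProduct.map (Finsupp.linearCombination R v) (Finsupp.linearCombination R v)
        ∘ₗ Coalgebra.comul := by
  ext i
  simp [(hv i).comul_eq_tmul_self]

lemma Finsupp.counit_comp_linearCombination (hv : ∀ i, IsGroupLikeElem R (v i)) :
    Coalgebra.counit ∘ₗ Finsupp.linearCombination R v = Coalgebra.counit := by
  ext i
  simp [(hv i).counit_eq_one]

end Grouplike

namespace FreeAb

variable {X}

def of (x : X) : FreeAb X := .ofAdd (Finsupp.single x 1)

def lift {M : Type*} [CommGroup M] (u : X → M) : FreeAb X →* M :=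
  AddMonoidHom.toMultiplicativeLeft
    (Finsupp.liftAddHom fun x => zmultiplesHom (Additive M) (Additive.ofMul (u x)))

@[simp] lemma lift_of {M : Type*} [CommGroup M] (u : X → M) (x : X) : lift u (of x) = u x := by
  simp [lift, of]

lemma hom_ext {M : Type*} [Monoid M] {f g : FreeAb X →* M} (h : ∀ x, f (of x) = g (of x)) :
    f = g := by
  ext x
  simpa [of] using h x

end FreeAb

lemma comulG_eq_comul : comulG k X = Coalgebra.comul := by
  ext g
  simp [comulG]

lemma counitG_eq_counit : counitG k X = Coalgebra.counit := by
  ext g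
  simp [counitG]

namespace TakData

variable {k C X} {T : Type} [CommRing T] [HopfAlgebra k T]

lemma isGroupLikeElem_t (D : TakData k C T) {c : C} (hc : IsGroupLikeElem k c) :
    IsGroupLikeElem k (D.t c) where
  counit_eq_one := by rw [← LinearMap.comp_apply, D.counit_t, hc.counit_eq_one]
  comul_eq_tmul_self := by
    rw [← LinearMap.comp_apply, D.comul_t, LinearMap.comp_apply, hc.comul_eq_tmul_self,
      TensorProduct.map_tmul]

lemma t_mul_tinv (D : TakData k C T) {c : C} (hc : IsGroupLikeElem k c) :
    D.t c * D.tinv c = 1 := by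
  rw [← D.antipode_t, LinearMap.comp_apply, (D.isGroupLikeElem_t hc).mul_antipode_cancel]

lemma algHom_ext {A : Type*} [Semiring A] [Algebra k A] (D : TakData k (X →₀ k) T)
    {φ ψ : T →ₐ[k] A} (h : φ.toLinearMap ∘ₗ D.t = ψ.toLinearMap ∘ₗ D.t) : φ = ψ := by
  have h_tinv : φ.toLinearMap ∘ₗ D.tinv = ψ.toLinearMap ∘ₗ D.tinv := by
    ext x
    change φ (D.tinv (Finsupp.single x 1)) = ψ (D.tinv (Finsupp.single x 1))
    have hx := D.t_mul_tinv (Finsupp.isGroupLikeElem_single_one x)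
    have ht : φ (D.t (Finsupp.single x 1)) = ψ (D.t (Finsupp.single x 1)) :=
      LinearMap.congr_fun h _
    refine left_inv_eq_right_inv (a := ψ (D.t (Finsupp.single x 1))) ?_ ?_
    · rw [← ht, ← map_mul, mul_comm, hx, map_one]
    · rw [← map_mul, hx, map_one]
  refine AlgHom.ext_of_adjoin_eq_top D.adjoin_eq_top ?_
  rintro _ (⟨c, rfl⟩ | ⟨c, rfl⟩)
  exacts [LinearMap.congr_fun h c, LinearMap.congr_fun h_tinv c]

def groupAlgHom (D : TakData k (X →₀ k) T) : MonoidAlgebra k (FreeAb X) →ₐ[k] T :=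
  MonoidAlgebra.lift k T (FreeAb X) <| (GroupLike.valMonoidHom k T).comp <|
    FreeAb.lift fun x =>
      ⟨D.t (Finsupp.single x 1), D.isGroupLikeElem_t (Finsupp.isGroupLikeElem_single_one x)⟩

@[simp] lemma groupAlgHom_single_of (D : TakData k (X →₀ k) T) (x : X) (a : k) :
    D.groupAlgHom (MonoidAlgebra.single (FreeAb.of x) a) = D.t (Finsupp.single x a) := by
  simp [groupAlgHom, ← map_smul]

end TakData

/-- Let `C = kX` be the coalgebra freely spanned by a set `X` of grouplike
elements (modelled as `X →₀ k` with `Δ(x) = x ⊗ x`, `ε(x) = 1`). Then the free commutative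
Hopf algebra `S(t_C)_Θ` is isomorphic as a Hopf algebra to the group algebra `k[ℤ^(X)]` of
the free abelian group on `X`. -/
theorem free_hopf_of_grouplike_coalgebra
    (T : Type) [CommRing T] [HopfAlgebra k T] (D : TakData k (X →₀ k) T)
    (univ : ∀ (A : Type) [CommRing A] [HopfAlgebra k A] (f : (X →₀ k) →ₗ[k] A),
      Coalgebra.comul ∘ₗ f = TensorProduct.map f f ∘ₗ Coalgebra.comul →
      Coalgebra.counit ∘ₗ f = Coalgebra.counit →
      ∃! F : T →ₐ[k] A,
        (Coalgebra.comul ∘ₗ F.toLinearMap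
          = TensorProduct.map F.toLinearMap F.toLinearMap ∘ₗ Coalgebra.comul) ∧
        (Coalgebra.counit ∘ₗ F.toLinearMap = (Coalgebra.counit : T →ₗ[k] k)) ∧
        F.toLinearMap ∘ₗ D.t = f) :
    ∃ Φ : T ≃ₐ[k] MonoidAlgebra k (FreeAb X),
      (comulG k X ∘ₗ Φ.toLinearMap
        = TensorProduct.map Φ.toLinearMap Φ.toLinearMap ∘ₗ Coalgebra.comul) ∧
      (counitG k X ∘ₗ Φ.toLinearMap = (Coalgebra.counit : T →ₗ[k] k)) ∧
      (∀ x : X,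
        Φ (D.t (Finsupp.single x 1))
          = MonoidAlgebra.single
              (Multiplicative.ofAdd (Finsupp.single x (1 : ℤ))) (1 : k)) := by
  have hv (x : X) : IsGroupLikeElem k (MonoidAlgebra.of k (FreeAb X) (FreeAb.of x)) :=
    MonoidAlgebra.isGroupLikeElem_single_one _
  obtain ⟨F, ⟨hF_comul, hF_counit, hF_t⟩, -⟩ := univ _ _
    (Finsupp.comul_comp_linearCombination hv) (Finsupp.counit_comp_linearCombination hv)
  have hF_t_single (x : X) :
      F (D.t (Finsupp.single x 1)) = MonoidAlgebra.single (FreeAb.of x) 1 := by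
    simpa using LinearMap.congr_fun hF_t (Finsupp.single x 1)
  have hFG : F.comp D.groupAlgHom = AlgHom.id k _ :=
    MonoidAlgebra.algHom_ext' (FreeAb.hom_ext fun x => by simp [hF_t_single])
      (Subsingleton.elim _ _)
  have hGF : D.groupAlgHom.comp F = AlgHom.id k T :=
    D.algHom_ext <| Finsupp.lhom_ext' fun x => LinearMap.ext_ring <| by simp [hF_t_single]
  refine ⟨AlgEquiv.ofAlgHom F D.groupAlgHom hFG hGF, ?_, ?_, hF_t_single⟩
  · rwa [comulG_eq_comul]
  · rwa [counitG_eq_counit]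

end Stmt4
end
end

section
/- Let H be a Hopf algebra and α a convolution-invertible two-cocycle on H with values in k. The bilinear map σ : H × H → S(t_H)_Θ defined by σ(x,y) = t_{x₁}t_{y₁}α(x₂,y₂)t⁻¹_{x₃y₃} is a two-cocycle of H with values in the commutative algebra S(t_H)_Θ, i.e., σ(x₁,y₁)σ(x₂y₂,z) = σ(y₁,z₁)σ(x,y₂z₂) for all x,y,z ∈ H. -/
open TensorProduct

noncomputable section

variable (k : Type) [Field k]

variable (C : Type) [AddCommGroup C] [Module k C] [Coalgebra k C]

/-!
In the convolution algebra of `H ⊗ H`, the generic cocycle is the gauge transform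
`σ = (t ⊗ t) * α * (t⁻¹ ∘ m)` of `α`. In the convolution algebra of `H ⊗ H ⊗ H`, each side of the
cocycle identity for `σ` becomes `(t ⊗ t ⊗ t) * (the same side for α) * (t⁻¹ ∘ m₃)`: the factors
`t⁻¹_{x₃y₃} t_{x₄y₄}` cancel, and the remaining `t` of the outer variable moves past the `α`
factor, because convolution factors depending on different tensor legs commute when the target
algebra is commutative.
-/

open WithConv

namespace LinearMap

section Precomp

variable {R M M' M'' A : Type*} [CommSemiring R] [Semiring A] [Algebra R A]
  [AddCommMonoid M] [Module R M] [Coalgebra R M]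
  [AddCommMonoid M'] [Module R M'] [Coalgebra R M']
  [AddCommMonoid M''] [Module R M''] [Coalgebra R M'']

def convPrecomp (φ : M' →ₗc[R] M) : WithConv (M →ₗ[R] A) →+* WithConv (M' →ₗ[R] A) where
  toFun f := toConv (f.ofConv ∘ₗ φ.toLinearMap)
  map_one' := by rw [convOne_def, comp_assoc, φ.counit_comp]; rfl
  map_mul' f g := by rw [convMul_comp_coalgHom_distrib]
  map_zero' := rfl
  map_add' _ _ := rfl

lemma convPrecomp_convPrecomp (φ : M' →ₗc[R] M) (ψ : M'' →ₗc[R] M')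
    (f : WithConv (M →ₗ[R] A)) :
    convPrecomp ψ (convPrecomp φ f) = convPrecomp (φ.comp ψ) f := rfl

lemma convPrecomp_id (f : WithConv (M →ₗ[R] A)) : convPrecomp (CoalgHom.id R M) f = f := rfl

variable {B : Type*} [Semiring B] [Algebra R B]

def convPostcomp (h : A →ₐ[R] B) : WithConv (M →ₗ[R] A) →+* WithConv (M →ₗ[R] B) where
  toFun f := toConv (h.toLinearMap ∘ₗ f.ofConv)
  map_one' := by ext; simp
  map_mul' f g := by rw [algHom_comp_convMul_distrib]
  map_zero' := by ext; simp
  map_add' _ _ := by ext; simp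

lemma convPostcomp_toConv (h : A →ₐ[R] B) (f : M →ₗ[R] A) :
    convPostcomp h (toConv f) = toConv (h.toLinearMap ∘ₗ f) := rfl

lemma convPostcomp_convPrecomp (h : A →ₐ[R] B) (φ : M' →ₗc[R] M) (f : WithConv (M →ₗ[R] A)) :
    convPostcomp h (convPrecomp φ f) = convPrecomp φ (convPostcomp h f) := rfl

end Precomp

section Tensor

variable {R M N P A : Type*} [CommSemiring R] [CommSemiring A] [Algebra R A]
  [AddCommMonoid M] [Module R M] [Coalgebra R M]
  [AddCommMonoid N] [Module R N] [Coalgebra R N]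
  [AddCommMonoid P] [Module R P] [Coalgebra R P]

def convTensor (f : WithConv (M →ₗ[R] A)) (g : WithConv (N →ₗ[R] A)) :
    WithConv (M ⊗[R] N →ₗ[R] A) :=
  toConv (mul' R A ∘ₗ map f.ofConv g.ofConv)

/- Commutativity of `A` enters here, through `mul' R A : A ⊗ A → A` being an algebra map. -/
lemma convTensor_mul_convTensor (f f' : WithConv (M →ₗ[R] A)) (g g' : WithConv (N →ₗ[R] A)) :
    convTensor f g * convTensor f' g' = convTensor (f * f') (g * g') := by
  have h := algHom_comp_convMul_distrib (Algebra.TensorProduct.lmul' R (S := A))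
    (toConv (map f.ofConv g.ofConv)) (toConv (map f'.ofConv g'.ofConv))
  rw [map_convMul_map, Algebra.TensorProduct.lmul'_toLinearMap] at h
  exact WithConv.ext h.symm

lemma convTensor_mul_one (f f' : WithConv (M →ₗ[R] A)) :
    convTensor (f * f') (1 : WithConv (N →ₗ[R] A)) = convTensor f 1 * convTensor f' 1 := by
  rw [convTensor_mul_convTensor, mul_one]

lemma convTensor_one_mul (g g' : WithConv (N →ₗ[R] A)) :
    convTensor (1 : WithConv (M →ₗ[R] A)) (g * g') = convTensor 1 g * convTensor 1 g' := by
  rw [convTensor_mul_convTensor, mul_one]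

lemma convTensor_eq_mul (f : WithConv (M →ₗ[R] A)) (g : WithConv (N →ₗ[R] A)) :
    convTensor f g = convTensor f 1 * convTensor 1 g := by
  rw [convTensor_mul_convTensor, mul_one, one_mul]

lemma convTensor_eq_mul' (f : WithConv (M →ₗ[R] A)) (g : WithConv (N →ₗ[R] A)) :
    convTensor f g = convTensor 1 g * convTensor f 1 := by
  rw [convTensor_mul_convTensor, mul_one, one_mul]

lemma convPrecomp_map_convTensor {M' N' : Type*} [AddCommMonoid M'] [Module R M'] [Coalgebra R M']
    [AddCommMonoid N'] [Module R N'] [Coalgebra R N'] (φ : M' →ₗc[R] M) (ψ : N' →ₗc[R] N)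
    (f : WithConv (M →ₗ[R] A)) (g : WithConv (N →ₗ[R] A)) :
    convPrecomp (Coalgebra.TensorProduct.map φ ψ) (convTensor f g) =
      convTensor (convPrecomp φ f) (convPrecomp ψ g) := by
  ext m n
  rfl

lemma convPrecomp_assoc_convTensor (f : WithConv (M →ₗ[R] A)) (g : WithConv (N →ₗ[R] A))
    (h : WithConv (P →ₗ[R] A)) :
    convPrecomp (Coalgebra.TensorProduct.assoc R R M N P).toCoalgHom
      (convTensor f (convTensor g h)) = convTensor (convTensor f g) h := by
  ext m n p
  simp [convPrecomp, convTensor, mul_assoc]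

lemma convPostcomp_convTensor {B : Type*} [CommSemiring B] [Algebra R B] (h : A →ₐ[R] B)
    (f : WithConv (M →ₗ[R] A)) (g : WithConv (N →ₗ[R] A)) :
    convPostcomp h (convTensor f g) = convTensor (convPostcomp h f) (convPostcomp h g) := by
  ext m n
  simp [convPostcomp, convTensor]

end Tensor

end LinearMap

open LinearMap

section Gauge

variable {R H A : Type*} [CommSemiring R] [CommSemiring A] [Algebra R A]
  [Semiring H] [Bialgebra R H]

local notation "μ" => Bialgebra.mulCoalgHom R H
local notation "μ₁₂" => Coalgebra.TensorProduct.map (Bialgebra.mulCoalgHom R H) (CoalgHom.id R H)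
local notation "μ₂₃" => Coalgebra.TensorProduct.map (CoalgHom.id R H) (Bialgebra.mulCoalgHom R H)
local notation "α₃" => CoalgEquiv.toCoalgHom (Coalgebra.TensorProduct.assoc R R H H H)

lemma mulCoalgHom_assoc : (μ).comp ((μ₂₃).comp α₃) = (μ).comp μ₁₂ := by
  apply CoalgHom.coe_linearMap_injective
  ext x y z
  simp [mul_assoc]

def gaugeTransform (γ γ' : WithConv (H →ₗ[R] A)) (β : WithConv (H ⊗[R] H →ₗ[R] A)) :
    WithConv (H ⊗[R] H →ₗ[R] A) :=
  convTensor γ γ * β * convPrecomp μ γ'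

variable {γ γ' : WithConv (H →ₗ[R] A)} (β : WithConv (H ⊗[R] H →ₗ[R] A))

lemma gaugeTransform_mul_convPrecomp (h : γ' * γ = 1) :
    gaugeTransform γ γ' β * convPrecomp μ γ = convTensor γ γ * β := by
  rw [gaugeTransform, mul_assoc, ← map_mul, h, map_one, mul_one]

lemma gaugeTransform_cocycle_left (h : γ' * γ = 1) :
    convTensor (gaugeTransform γ γ' β) 1 * convPrecomp μ₁₂ (gaugeTransform γ γ' β) =
      convTensor (convTensor γ γ) γ * (convTensor β 1 * convPrecomp μ₁₂ β) *
        convPrecomp μ₁₂ (convPrecomp μ γ') := by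
  have hpre : convPrecomp μ₁₂ (gaugeTransform γ γ' β) = convTensor (convPrecomp μ γ) 1 *
      convTensor 1 γ * (convPrecomp μ₁₂ β * convPrecomp μ₁₂ (convPrecomp μ γ')) := by
    rw [gaugeTransform, map_mul, map_mul, convPrecomp_map_convTensor, convPrecomp_id,
      convTensor_eq_mul, mul_assoc]
  calc _ = convTensor (gaugeTransform γ γ' β * convPrecomp μ γ) 1 * convTensor 1 γ *
        (convPrecomp μ₁₂ β * convPrecomp μ₁₂ (convPrecomp μ γ')) := by
        rw [hpre, convTensor_mul_one]; simp only [mul_assoc]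
    _ = convTensor (convTensor γ γ) 1 * (convTensor β 1 * convTensor 1 γ) *
        (convPrecomp μ₁₂ β * convPrecomp μ₁₂ (convPrecomp μ γ')) := by
        rw [gaugeTransform_mul_convPrecomp β h, convTensor_mul_one]; simp only [mul_assoc]
    _ = _ := by
        rw [← convTensor_eq_mul, convTensor_eq_mul' β γ, convTensor_eq_mul (convTensor γ γ) γ]
        simp only [mul_assoc]

lemma gaugeTransform_cocycle_right (h : γ' * γ = 1) :
    convTensor 1 (gaugeTransform γ γ' β) * convPrecomp μ₂₃ (gaugeTransform γ γ' β) =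
      convTensor γ (convTensor γ γ) * (convTensor 1 β * convPrecomp μ₂₃ β) *
        convPrecomp μ₂₃ (convPrecomp μ γ') := by
  have hpre : convPrecomp μ₂₃ (gaugeTransform γ γ' β) = convTensor γ 1 *
      convTensor 1 (convPrecomp μ γ) *
        (convPrecomp μ₂₃ β * convPrecomp μ₂₃ (convPrecomp μ γ')) := by
    rw [gaugeTransform, map_mul, map_mul, convPrecomp_map_convTensor, convPrecomp_id,
      convTensor_eq_mul, mul_assoc]
  calc _ = convTensor 1 (gaugeTransform γ γ' β) * convTensor γ 1 *
        convTensor 1 (convPrecomp μ γ) *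
        (convPrecomp μ₂₃ β * convPrecomp μ₂₃ (convPrecomp μ γ')) := by
        rw [hpre]; simp only [mul_assoc]
    _ = convTensor γ 1 * convTensor 1 (gaugeTransform γ γ' β * convPrecomp μ γ) *
        (convPrecomp μ₂₃ β * convPrecomp μ₂₃ (convPrecomp μ γ')) := by
        rw [← convTensor_eq_mul', convTensor_eq_mul, convTensor_one_mul]; simp only [mul_assoc]
    _ = _ := by
        rw [gaugeTransform_mul_convPrecomp β h, convTensor_one_mul, ← mul_assoc (convTensor γ 1),
          ← convTensor_eq_mul]
        simp only [mul_assoc]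

end Gauge

section Cocycle

variable {k} {H A : Type} [Ring H] [HopfAlgebra k H] [CommRing A] [Algebra k A]

local notation "μ" => Bialgebra.mulCoalgHom k H
local notation "μ₁₂" => Coalgebra.TensorProduct.map (Bialgebra.mulCoalgHom k H) (CoalgHom.id k H)
local notation "μ₂₃" => Coalgebra.TensorProduct.map (CoalgHom.id k H) (Bialgebra.mulCoalgHom k H)
local notation "α₃" => CoalgEquiv.toCoalgHom (Coalgebra.TensorProduct.assoc k k H H H)

lemma isCocycle_iff (β : H ⊗[k] H →ₗ[k] A) :
    IsCocycle k β ↔ convTensor (toConv β) 1 * convPrecomp μ₁₂ (toConv β) =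
      convPrecomp α₃ (convTensor 1 (toConv β) * convPrecomp μ₂₃ (toConv β)) := by
  rw [map_mul, WithConv.ext_iff]
  rfl

lemma IsCocycle.algHom_comp {B : Type} [CommRing B] [Algebra k B] {β : H ⊗[k] H →ₗ[k] B}
    (hβ : IsCocycle k β) (h : B →ₐ[k] A) : IsCocycle k (h.toLinearMap ∘ₗ β) := by
  rw [isCocycle_iff] at hβ ⊢
  simpa only [map_mul, map_one, convPostcomp_convTensor, convPostcomp_convPrecomp,
    convPostcomp_toConv] using congrArg (convPostcomp h) hβ

lemma isCocycle_gaugeTransform {γ γ' : WithConv (H →ₗ[k] A)} {β : H ⊗[k] H →ₗ[k] A}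
    (h : γ' * γ = 1) (hβ : IsCocycle k β) :
    IsCocycle k (gaugeTransform γ γ' (toConv β)).ofConv := by
  rw [isCocycle_iff] at hβ ⊢
  rw [gaugeTransform_cocycle_left _ h, gaugeTransform_cocycle_right _ h, map_mul, map_mul, hβ,
    convPrecomp_assoc_convTensor, convPrecomp_convPrecomp, convPrecomp_convPrecomp,
    convPrecomp_convPrecomp, mulCoalgHom_assoc]

end Cocycle

lemma TakData.sigma_eq_gaugeTransform {H T : Type} [Ring H] [HopfAlgebra k H] [CommRing T]
    [HopfAlgebra k T] (D : TakData k H T) (α : H ⊗[k] H →ₗ[k] k) :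
    D.sigma α = (gaugeTransform (toConv D.t) (toConv D.tinv)
      (toConv (Algebra.linearMap k T ∘ₗ α))).ofConv :=
  rfl

theorem generic_cocycle_isCocycle
    {H : Type} [Ring H] [HopfAlgebra k H]
    {T : Type} [CommRing T] [HopfAlgebra k T] (D : TakData k H T)
    (α : H ⊗[k] H →ₗ[k] k)
    (hcoc : IsCocycle k α) :
    IsCocycle k (D.sigma α) := by
  rw [D.sigma_eq_gaugeTransform]
  exact isCocycle_gaugeTransform (WithConv.ext D.conv_tinv_t) (hcoc.algHom_comp (Algebra.ofId k T))
end
end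

section
/- Let H be a Hopf algebra, α a convolution-invertible two-cocycle on H with convolution inverse α⁻¹, and σ(x,y) = t_{x₁}t_{y₁}α(x₂,y₂)t⁻¹_{x₃y₃} the generic cocycle in S(t_H)_Θ. Then the map σ⁻¹(x,y) = t_{x₁y₁}α⁻¹(x₂,y₂)t⁻¹_{x₃}t⁻¹_{y₃} is the convolution inverse of σ, i.e., σ(x₁,y₁)σ⁻¹(x₂,y₂) = σ⁻¹(x₁,y₁)σ(x₂,y₂) = ε(x)ε(y)1. -/
open TensorProduct

noncomputable section

variable (k : Type) [Field k]

variable (C : Type) [AddCommGroup C] [Module k C] [Coalgebra k C]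

/-! In the convolution monoid of linear maps `H ⊗ H → T`, `σ` is the product `a * b * c` of
`a(x,y) = t_x t_y`, `b = α` and `c(x,y) = t⁻¹_{xy}`, and `σ⁻¹` is `c⁻¹ * b⁻¹ * a⁻¹`. The inverse of
`a` is `t⁻¹_x t⁻¹_y` because convolution into a commutative algebra is multiplicative on tensor
products, and the inverse of `c` is `t_{xy}` because multiplication `H ⊗ H → H` is a coalgebra map. -/

open WithConv

section Convolution

variable {k} {C}
variable {E A B : Type} [AddCommGroup E] [Module k E] [Coalgebra k E]
  [Ring A] [Algebra k A] [Ring B] [Algebra k B]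

theorem conv_assoc (f g h : C →ₗ[k] A) :
    conv k (conv k f g) h = conv k f (conv k g h) :=
  congrArg ofConv (mul_assoc (toConv f) (toConv g) (toConv h))

theorem AlgHom.comp_conv (φ : A →ₐ[k] B) (f g : C →ₗ[k] A) :
    φ.toLinearMap ∘ₗ conv k f g = conv k (φ.toLinearMap ∘ₗ f) (φ.toLinearMap ∘ₗ g) :=
  LinearMap.algHom_comp_convMul_distrib φ (toConv f) (toConv g)

theorem AlgHom.comp_convOne (φ : A →ₐ[k] B) :
    φ.toLinearMap ∘ₗ convOne k = (convOne k : C →ₗ[k] B) := by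
  ext x
  simp [convOne]

theorem conv_comp_coalgHom (f g : C →ₗ[k] A) (φ : E →ₗc[k] C) :
    conv k (f ∘ₗ (φ : E →ₗ[k] C)) (g ∘ₗ (φ : E →ₗ[k] C)) =
      conv k f g ∘ₗ (φ : E →ₗ[k] C) :=
  (LinearMap.convMul_comp_coalgHom_distrib (toConv f) (toConv g) φ).symm

theorem convOne_comp_coalgHom (φ : E →ₗc[k] C) :
    convOne k ∘ₗ (φ : E →ₗ[k] C) = (convOne k : E →ₗ[k] A) := by
  rw [convOne, LinearMap.comp_assoc, CoalgHomClass.counit_comp]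
  rfl

end Convolution

section CommConvolution

variable {k} {C}
variable {E A : Type} [AddCommGroup E] [Module k E] [Coalgebra k E] [CommRing A] [Algebra k A]

theorem conv_mul'_map (f₁ g₁ : C →ₗ[k] A) (f₂ g₂ : E →ₗ[k] A) :
    conv k (LinearMap.mul' k A ∘ₗ TensorProduct.map f₁ f₂)
        (LinearMap.mul' k A ∘ₗ TensorProduct.map g₁ g₂) =
      LinearMap.mul' k A ∘ₗ TensorProduct.map (conv k f₁ g₁) (conv k f₂ g₂) := by
  rw [← Algebra.TensorProduct.lmul'_toLinearMap (R := k), ← AlgHom.comp_conv]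
  exact congrArg (fun F => _ ∘ₗ ofConv F) (TensorProduct.map_convMul_map
    (f := toConv f₁) (h := toConv g₁) (g := toConv f₂) (k := toConv g₂))

theorem mul'_map_convOne :
    LinearMap.mul' k A ∘ₗ TensorProduct.map (convOne k) (convOne k) =
      (convOne k : C ⊗[k] E →ₗ[k] A) := by
  ext x y
  simp [convOne, mul_comm]

end CommConvolution

namespace IsConvInverse

variable {k}
variable {H : Type} [Ring H] [HopfAlgebra k H] {A B : Type} [CommRing A] [Algebra k A]
  [CommRing B] [Algebra k B] {β β' γ γ' : H ⊗[k] H →ₗ[k] A}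

def unit (h : IsConvInverse k β β') : (WithConv (H ⊗[k] H →ₗ[k] A))ˣ :=
  ⟨toConv β, toConv β', congrArg toConv h.1, congrArg toConv h.2⟩

theorem conv (hβ : IsConvInverse k β β') (hγ : IsConvInverse k γ γ') :
    IsConvInverse k (_root_.conv k β γ) (_root_.conv k γ' β') :=
  ⟨congrArg ofConv (hβ.unit * hγ.unit).mul_inv, congrArg ofConv (hβ.unit * hγ.unit).inv_mul⟩

theorem algHom_comp (φ : A →ₐ[k] B) (h : IsConvInverse k β β') :
    IsConvInverse k (φ.toLinearMap ∘ₗ β) (φ.toLinearMap ∘ₗ β') := by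
  constructor <;> rw [← AlgHom.comp_conv, ← φ.comp_convOne]
  exacts [congrArg _ h.1, congrArg _ h.2]

end IsConvInverse

namespace TakData

variable {k}
variable {H : Type} [Ring H] [HopfAlgebra k H] {T : Type} [CommRing T] [HopfAlgebra k T]
  (D : TakData k H T)

theorem isConvInverse_tt_tinvtinv : IsConvInverse k D.tt D.tinvtinv :=
  ⟨by rw [tt, tinvtinv, conv_mul'_map, D.conv_t_tinv, mul'_map_convOne],
   by rw [tt, tinvtinv, conv_mul'_map, D.conv_tinv_t, mul'_map_convOne]⟩

theorem isConvInverse_tinvMul_tMul : IsConvInverse k D.tinvMul D.tMul := by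
  simp only [IsConvInverse, tinvMul, tMul, ← Bialgebra.toLinearMap_mulCoalgHom, conv_comp_coalgHom,
    D.conv_tinv_t, D.conv_t_tinv, convOne_comp_coalgHom, and_self]

end TakData

theorem generic_cocycle_convInverse
    {H : Type} [Ring H] [HopfAlgebra k H]
    {T : Type} [CommRing T] [HopfAlgebra k T] (D : TakData k H T)
    (α αinv : H ⊗[k] H →ₗ[k] k)
    (hinv : IsConvInverse k α αinv) :
    IsConvInverse k (D.sigma α) (D.sigmaInv αinv) := by
  have hα : IsConvInverse k (Algebra.linearMap k T ∘ₗ α) (Algebra.linearMap k T ∘ₗ αinv) :=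
    hinv.algHom_comp (Algebra.ofId k T)
  rw [TakData.sigmaInv, conv_assoc]
  exact (D.isConvInverse_tt_tinvtinv.conv hα).conv D.isConvInverse_tinvMul_tMul
end
end

section
/- Let H be a Hopf algebra and B_H the generic base algebra for the trivial cocycle. Then S(t_H)_Θ is generated as a B_H-module by the elements t_x, x ∈ H. In particular, each product t_x t_y and each inverse t⁻¹_x lies in the B_H-submodule spanned by the t_z. -/
open TensorProduct

noncomputable section

variable (k : Type) [Field k]

variable (C : Type) [AddCommGroup C] [Module k C] [Coalgebra k C]

/-!
Products: `σ * (t ∘ m) = tt * ((t⁻¹ * t) ∘ m) = tt` in the convolution algebra of `H ⊗ H`, so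
`t_x t_y = Σ σ(x₁, y₁) t_{x₂y₂}`.

Inverses: for commutative `T`, `(f, g) ↦ (x ⊗ y ↦ f x g y)` is multiplicative for convolution,
so `σ⁻¹ * (t ⊗ ε) = (t ∘ m) * (t⁻¹ ⊗ t⁻¹) * (t ⊗ ε) = (t ∘ m) * (ε ⊗ t⁻¹)`, which is
`x ⊗ y ↦ Σ t_{x y₁} t⁻¹_{y₂}`. At `S(z₁) ⊗ z₂` it takes the value `t_1 t⁻¹_z`, because the Hopf–Galois
map sends `S(z₁) ⊗ z₂` to `1 ⊗ z`. As `t⁻¹_1 = σ⁻¹(1, 1) ∈ B_H`, every `t⁻¹_z` lies in the span of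
the `t_x`, which is therefore a subalgebra containing the generators of `S(t_H)_Θ`.
-/

open Coalgebra WithConv LinearMap

variable {k}

lemma toConv_conv {C A : Type} [AddCommGroup C] [Module k C] [Coalgebra k C] [Ring A]
    [Algebra k A] (f g : C →ₗ[k] A) : toConv (conv k f g) = toConv f * toConv g := rfl

lemma toConv_convOne {C A : Type} [AddCommGroup C] [Module k C] [Coalgebra k C] [Ring A]
    [Algebra k A] : toConv (convOne k : C →ₗ[k] A) = 1 := rfl

lemma Submodule.span_eq_top_of_adjoin_eq_top {R A : Type*} [CommSemiring R] [CommSemiring A]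
    [Algebra R A] {B : Subalgebra R A} {s g : Set A} (hg : Algebra.adjoin R g = ⊤)
    (hone : 1 ∈ span B s) (hmul : ∀ x ∈ s, ∀ y ∈ s, x * y ∈ span B s) (hsub : g ⊆ span B s) :
    span B s = ⊤ := by
  have hle : span B s * span B s ≤ span B s := by
    rw [span_mul_span, span_le]
    rintro _ ⟨x, hx, y, hy, rfl⟩
    exact hmul x hx y hy
  have hadjoin : Algebra.adjoin R g ≤
      ((span B s).toSubalgebra hone fun _ _ hx hy => hle (mul_mem_mul hx hy)).restrictScalars R :=
    Algebra.adjoin_le hsub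
  rw [hg] at hadjoin
  exact eq_top_iff.mpr fun x _ => hadjoin trivial

variable {R : Type*} [CommSemiring R]

lemma TensorProduct.apply_mem_of_forall_tmul_mem {M N A : Type*} [AddCommMonoid M] [Module R M]
    [AddCommMonoid N] [Module R N] [AddCommMonoid A] [Module R A] {S : Submodule R A}
    (F : M ⊗[R] N →ₗ[R] A) (h : ∀ x y, F (x ⊗ₜ y) ∈ S) (u : M ⊗[R] N) : F u ∈ S := by
  induction u using TensorProduct.induction_on with
  | zero => simp
  | add u v hu hv => simpa only [map_add] using S.add_mem hu hv
  | tmul x y => exact h x y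

section Convolution

variable {C A : Type*} [AddCommMonoid C] [Module R C] [Coalgebra R C]

lemma ofConv_one_comp_coalgHom [Semiring A] [Algebra R A] {D : Type*} [AddCommMonoid D]
    [Module R D] [Coalgebra R D] (φ : D →ₗc[R] C) :
    (1 : WithConv (C →ₗ[R] A)).ofConv ∘ₗ φ.toLinearMap = (1 : WithConv (D →ₗ[R] A)).ofConv := by
  ext; simp

lemma convMul_apply_mem_of_forall_mem [CommSemiring A] [Algebra R A] {B : Subalgebra R A}
    {M : Submodule B A} {f g : C →ₗ[R] A} (hf : ∀ c, f c ∈ B) (hg : ∀ c, g c ∈ M) (c : C) :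
    (toConv f * toConv g) c ∈ M := by
  rw [convMul_apply]
  induction comul (R := R) c using TensorProduct.induction_on with
  | zero => simp
  | add u v hu hv => simpa only [map_add] using M.add_mem hu hv
  | tmul x y => exact M.smul_mem ⟨f x, hf x⟩ (hg y)

lemma toConv_mul'_map_convMul {D : Type*} [AddCommMonoid D] [Module R D] [Coalgebra R D]
    [CommSemiring A] [Algebra R A] (f h : C →ₗ[R] A) (g l : D →ₗ[R] A) :
    toConv (mul' R A ∘ₗ map (toConv f * toConv h).ofConv (toConv g * toConv l).ofConv) =
      toConv (mul' R A ∘ₗ map f g) * toConv (mul' R A ∘ₗ map h l) := by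
  have hmap := congrArg ofConv (TensorProduct.map_convMul_map (f := toConv f) (h := toConv h)
    (g := toConv g) (k := toConv l))
  dsimp only at hmap
  rw [← hmap, ← Algebra.TensorProduct.lmul'_toLinearMap (R := R), algHom_comp_convMul_distrib]

end Convolution

section GaloisMap

variable {H : Type*} [Semiring H]

/-- The Hopf–Galois map `x ⊗ y ↦ x y₁ ⊗ y₂`. -/
def galoisMap [Bialgebra R H] : H ⊗[R] H →ₗ[R] H ⊗[R] H :=
  rTensor H (mul' R H) ∘ₗ (TensorProduct.assoc R H H H).symm.toLinearMap ∘ₗ lTensor H comul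

lemma convMul_comp_mul'_apply [Bialgebra R H] {A : Type*} [Semiring A] [Algebra R A]
    (f g : H →ₗ[R] A) (u : H ⊗[R] H) :
    (toConv (f ∘ₗ mul' R H) * toConv (mul' R A ∘ₗ map (1 : WithConv (H →ₗ[R] A)).ofConv g)) u
      = mul' R A (map f g (galoisMap u)) := by
  induction u using TensorProduct.induction_on with
  | zero => simp
  | add u v hu hv => simp only [map_add, hu, hv]
  | tmul x y =>
    have hx : ∑ i ∈ (ℛ R x).index, counit (R := R) ((ℛ R x).right i) • (ℛ R x).left i = x := by
      simpa only [map_sum, TensorProduct.rid_tmul, one_smul]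
        using congr(TensorProduct.rid R H $(sum_tmul_counit_eq (ℛ R x)))
    conv_rhs => rw [galoisMap, comp_apply, comp_apply, lTensor_tmul, ← (ℛ R y).eq, ← hx]
    rw [((ℛ R x).tmul (ℛ R y)).convMul_apply]
    simp [Finset.sum_product_right, TensorProduct.tmul_sum, TensorProduct.sum_tmul,
      ← Algebra.smul_def]

lemma galoisMap_rTensor_antipode_comul [HopfAlgebra R H] (z : H) :
    galoisMap (rTensor H (HopfAlgebra.antipode R) (comul z)) = (1 : H) ⊗ₜ[R] z := by
  have hcomm : lTensor H (comul (R := R)) (rTensor H (HopfAlgebra.antipode R) (comul z)) =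
      rTensor (H ⊗[R] H) (HopfAlgebra.antipode R) (lTensor H comul (comul z)) := by
    rw [← comp_apply, lTensor_comp_rTensor, ← rTensor_comp_lTensor]; rfl
  rw [galoisMap, comp_apply, comp_apply, hcomm, rTensor_tensor]
  simp only [comp_apply, LinearEquiv.coe_coe, LinearEquiv.symm_apply_apply]
  rw [coassoc_symm_apply, ← rTensor_comp_apply, ← rTensor_comp_apply, comp_assoc,
    HopfAlgebra.mul_antipode_rTensor_comul, rTensor_comp_apply, rTensor_counit_comul]
  simp

end GaloisMap

namespace TakData

variable {H : Type} [Ring H] [HopfAlgebra k H] {T : Type} [CommRing T] [HopfAlgebra k T]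
  (D : TakData k H T)

lemma sigmaEps_convMul_tMul : toConv D.sigmaEps * toConv D.tMul = toConv D.tt := by
  have h : toConv D.tinvMul * toConv D.tMul = 1 := by
    have hdist := convMul_comp_coalgHom_distrib (toConv D.tinv) (toConv D.t)
      (Bialgebra.mulCoalgHom k H)
    rw [← toConv_conv, D.conv_tinv_t, toConv_convOne, ofConv_one_comp_coalgHom] at hdist
    rw [tinvMul, tMul, ← Bialgebra.toLinearMap_mulCoalgHom]
    exact (congrArg toConv hdist).symm
  rw [sigmaEps, toConv_conv, mul_assoc, h, mul_one]

lemma sigmaEpsInv_convMul_t_tmul_one :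
    toConv D.sigmaEpsInv * toConv (mul' k T ∘ₗ map D.t (1 : WithConv (H →ₗ[k] T)).ofConv) =
      toConv D.tMul * toConv (mul' k T ∘ₗ map (1 : WithConv (H →ₗ[k] T)).ofConv D.tinv) := by
  have h : (toConv D.tinv * toConv D.t).ofConv = (1 : WithConv (H →ₗ[k] T)).ofConv :=
    D.conv_tinv_t
  rw [sigmaEpsInv, toConv_conv, tinvtinv, mul_assoc, ← toConv_mul'_map_convMul, h, mul_one]

lemma t_one_mul_tinv_one : D.t 1 * D.tinv 1 = 1 := by
  have h : (toConv D.t * toConv D.tinv) 1 = (1 : WithConv (H →ₗ[k] T)) 1 :=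
    congr($(D.conv_t_tinv) 1)
  simpa [Algebra.TensorProduct.one_def] using h

lemma sigmaEpsInv_one_tmul_one : D.sigmaEpsInv ((1 : H) ⊗ₜ[k] (1 : H)) = D.tinv 1 := by
  rw [← Algebra.TensorProduct.one_def, sigmaEpsInv, conv, comp_apply, comp_apply,
    Bialgebra.comul_one]
  simp [tMul, tinvtinv, Algebra.TensorProduct.one_def, ← mul_assoc, t_one_mul_tinv_one]

lemma t_one_mul_tinv_eq (z : H) :
    D.t 1 * D.tinv z =
      (toConv D.sigmaEpsInv * toConv (mul' k T ∘ₗ map D.t (1 : WithConv (H →ₗ[k] T)).ofConv))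
        (rTensor H (HopfAlgebra.antipode k) (comul z)) := by
  rw [sigmaEpsInv_convMul_t_tmul_one, tMul, convMul_comp_mul'_apply,
    galoisMap_rTensor_antipode_comul]
  simp

lemma sigmaEps_mem_B (u : H ⊗[k] H) : D.sigmaEps u ∈ D.B :=
  TensorProduct.apply_mem_of_forall_tmul_mem (S := Subalgebra.toSubmodule D.B) _
    (fun x y => Algebra.subset_adjoin (Or.inl ⟨(x, y), rfl⟩)) u

lemma sigmaEpsInv_mem_B (u : H ⊗[k] H) : D.sigmaEpsInv u ∈ D.B :=
  TensorProduct.apply_mem_of_forall_tmul_mem (S := Subalgebra.toSubmodule D.B) _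
    (fun x y => Algebra.subset_adjoin (Or.inr ⟨(x, y), rfl⟩)) u

lemma tinv_one_mem_B : D.tinv 1 ∈ D.B :=
  D.sigmaEpsInv_one_tmul_one ▸ D.sigmaEpsInv_mem_B _

lemma t_mem_span (z : H) : D.t z ∈ Submodule.span D.B (Set.range D.t) :=
  Submodule.subset_span ⟨z, rfl⟩

lemma t_mul_t_mem_span (x y : H) : D.t x * D.t y ∈ Submodule.span D.B (Set.range D.t) := by
  have h := congr($(D.sigmaEps_convMul_tMul) (x ⊗ₜ[k] y))
  simp only [tt, comp_apply, map_tmul, mul'_apply] at h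
  rw [← h]
  exact convMul_apply_mem_of_forall_mem D.sigmaEps_mem_B (fun _ => D.t_mem_span _) _

lemma one_mem_span : (1 : T) ∈ Submodule.span D.B (Set.range D.t) := by
  rw [← D.t_one_mul_tinv_one, mul_comm]
  exact Submodule.smul_mem _ ⟨_, D.tinv_one_mem_B⟩ (D.t_mem_span 1)

lemma tinv_mem_span (z : H) : D.tinv z ∈ Submodule.span D.B (Set.range D.t) := by
  set M := Submodule.span D.B (Set.range D.t)
  have ht_tmul_counit (u : H ⊗[k] H) :
      (mul' k T ∘ₗ map D.t (1 : WithConv (H →ₗ[k] T)).ofConv) u ∈ M :=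
    TensorProduct.apply_mem_of_forall_tmul_mem (S := M.restrictScalars k) _ (fun x y => by
      simpa [← Algebra.commutes, ← Algebra.smul_def] using
        (M.restrictScalars k).smul_mem (counit y) (D.t_mem_span x)) u
  have h : D.tinv z = D.tinv 1 * (D.t 1 * D.tinv z) := by
    rw [← mul_assoc, mul_comm (D.tinv 1), D.t_one_mul_tinv_one, one_mul]
  rw [h, D.t_one_mul_tinv_eq]
  exact M.smul_mem ⟨_, D.tinv_one_mem_B⟩
    (convMul_apply_mem_of_forall_mem D.sigmaEpsInv_mem_B ht_tmul_counit _)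

end TakData

/-- `S(t_H)_Θ` is generated as a `B_H`-module by the elements `t_x`;
in particular every product `t_x t_y` and every `t⁻¹_x` lies in the `B_H`-submodule
spanned by the `t_z`. -/
theorem span_t_eq_top
    {H : Type} [Ring H] [HopfAlgebra k H]
    {T : Type} [CommRing T] [HopfAlgebra k T] (D : TakData k H T) :
    Submodule.span (↥D.B) (Set.range ⇑D.t) = (⊤ : Submodule (↥D.B) T) ∧
    (∀ x y : H, D.t x * D.t y ∈ Submodule.span (↥D.B) (Set.range ⇑D.t)) ∧
    (∀ x : H, D.tinv x ∈ Submodule.span (↥D.B) (Set.range ⇑D.t)) := by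
  refine ⟨Submodule.span_eq_top_of_adjoin_eq_top D.adjoin_eq_top D.one_mem_span ?_ ?_,
    D.t_mul_t_mem_span, D.tinv_mem_span⟩
  · rintro _ ⟨x, rfl⟩ _ ⟨y, rfl⟩
    exact D.t_mul_t_mem_span x y
  · rintro _ (⟨z, rfl⟩ | ⟨z, rfl⟩)
    exacts [D.t_mem_span z, D.tinv_mem_span z]
end
end

section
/- Let H be a cocommutative Hopf algebra. Then the generic base algebra B_H is a Hopf subalgebra of S(t_H)_Θ: it satisfies Δ(σ(x,y)) = σ(x₁,y₁) ⊗ σ(x₂,y₂), Δ(σ⁻¹(x,y)) = σ⁻¹(x₁,y₁) ⊗ σ⁻¹(x₂,y₂), S(σ(x,y)) = σ⁻¹(x,y), and S(σ⁻¹(x,y)) = σ(x,y). -/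
/-!
Cocommutativity of `H`, hence of `H ⊗ H`, makes comultiplication a coalgebra map, so convolution
products of coalgebra maps `H ⊗ H → T` are again coalgebra maps. Both `σ = (t·t) * (t⁻¹ ∘ μ)` and
`σ⁻¹ = (t ∘ μ) * (t⁻¹·t⁻¹)` are such products (`t⁻¹` is a coalgebra map only because `H` is
cocommutative), which gives the coproduct formulas. The antipode of the commutative Hopf algebra
`T` is an algebra map exchanging `t` and `t⁻¹`; it therefore distributes over convolution, and
commutativity of the convolution algebra turns `S ∘ σ = (t⁻¹·t⁻¹) * (t ∘ μ)` into `σ⁻¹`, and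
symmetrically. Since `Δ` and `S` are algebra maps, stability of `B_H` is checked on generators.
-/

open TensorProduct

noncomputable section

variable (k : Type) [Field k]

variable (C : Type) [AddCommGroup C] [Module k C] [Coalgebra k C]

open Coalgebra HopfAlgebra WithConv

/-- Over a cocommutative coalgebra comultiplication is a coalgebra map, hence so is
`μ ∘ (f ⊗ g) ∘ δ`. -/
def CoalgHom.convMul {R M A : Type*} [CommSemiring R] [AddCommMonoid M] [Module R M]
    [Coalgebra R M] [IsCocomm R M] [Semiring A] [Bialgebra R A] (f g : M →ₗc[R] A) :
    M →ₗc[R] A :=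
  (Bialgebra.mulCoalgHom R A).comp
    ((Coalgebra.TensorProduct.map f g).comp (Coalgebra.comulCoalgHom R M))

lemma TensorProduct.range_le_of_forall_tmul_mem {R M N P : Type*} [CommSemiring R]
    [AddCommMonoid M] [AddCommMonoid N] [AddCommMonoid P] [Module R M] [Module R N] [Module R P]
    {f : M ⊗[R] N →ₗ[R] P} {p : Submodule R P} (hf : ∀ m n, f (m ⊗ₜ n) ∈ p) :
    LinearMap.range f ≤ p := by
  rw [LinearMap.range_eq_map, ← span_tmul_eq_top, Submodule.map_span, Submodule.span_le]
  rintro _ ⟨_, ⟨m, n, rfl⟩, rfl⟩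
  exact hf m n

section SubBialgebra

variable {R A : Type*} [CommSemiring R]

lemma Bialgebra.comul_apply_mem_range_mapIncl {M : Type*} [AddCommMonoid M] [Module R M]
    [Coalgebra R M] [Semiring A] [Bialgebra R A] {p : Submodule R A}
    {f : M →ₗ[R] A} (hf : LinearMap.range f ≤ p)
    (hcomul : comul ∘ₗ f = map f f ∘ₗ comul) (u : M) :
    comul (f u) ∈ LinearMap.range (mapIncl p p) := by
  have hf' : LinearMap.range f ≤ LinearMap.range p.subtype := by rwa [Submodule.range_subtype]
  exact range_map_mono hf' hf' ⟨comul u, (LinearMap.congr_fun hcomul u).symm⟩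

lemma Bialgebra.comul_mem_range_mapIncl_adjoin [Semiring A] [Bialgebra R A] {s : Set A}
    (hs : ∀ x ∈ s, comul x ∈ LinearMap.range
      (mapIncl (Subalgebra.toSubmodule (Algebra.adjoin R s))
        (Subalgebra.toSubmodule (Algebra.adjoin R s))))
    {b : A} (hb : b ∈ Algebra.adjoin R s) :
    comul b ∈ LinearMap.range
      (mapIncl (Subalgebra.toSubmodule (Algebra.adjoin R s))
        (Subalgebra.toSubmodule (Algebra.adjoin R s))) :=
  Algebra.adjoin_le (S := (Algebra.TensorProduct.map (Algebra.adjoin R s).val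
    (Algebra.adjoin R s).val).range.comap (Bialgebra.comulAlgHom R A)) hs hb

variable [CommSemiring A] [HopfAlgebra R A]

lemma HopfAlgebra.antipode_mem_adjoin {s : Set A}
    (hs : ∀ x ∈ s, antipode R x ∈ Algebra.adjoin R s) {b : A} (hb : b ∈ Algebra.adjoin R s) :
    antipode R b ∈ Algebra.adjoin R s :=
  Algebra.adjoin_le (S := (Algebra.adjoin R s).comap (antipodeAlgHom R A)) hs hb

lemma HopfAlgebra.antipode_comp_mul'_comp_map {M N : Type*} [AddCommMonoid M] [Module R M]
    [AddCommMonoid N] [Module R N] (f : M →ₗ[R] A) (g : N →ₗ[R] A) :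
    antipode R ∘ₗ LinearMap.mul' R A ∘ₗ map f g
      = LinearMap.mul' R A ∘ₗ map (antipode R ∘ₗ f) (antipode R ∘ₗ g) := by
  rw [← LinearMap.comp_assoc, ← toLinearMap_antipodeAlgHom, AlgHom.comp_mul',
    LinearMap.comp_assoc, ← map_comp]

end SubBialgebra

namespace TakData

variable {k} {H : Type} [Ring H] [HopfAlgebra k H]
variable {T : Type} [CommRing T] [HopfAlgebra k T] (D : TakData k H T)

def tCoalgHom : H →ₗc[k] T where
  toLinearMap := D.t
  counit_comp := D.counit_t
  map_comp_comul := D.comul_t.symm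

lemma antipode_comp_tt : antipode k ∘ₗ D.tt = D.tinvtinv := by
  rw [tt, antipode_comp_mul'_comp_map, D.antipode_t]; rfl

lemma antipode_comp_tinvtinv : antipode k ∘ₗ D.tinvtinv = D.tt := by
  rw [tinvtinv, antipode_comp_mul'_comp_map, D.antipode_tinv]; rfl

lemma antipode_comp_tMul : antipode k ∘ₗ D.tMul = D.tinvMul := by
  rw [tMul, ← LinearMap.comp_assoc, D.antipode_t]; rfl

lemma antipode_comp_tinvMul : antipode k ∘ₗ D.tinvMul = D.tMul := by
  rw [tinvMul, ← LinearMap.comp_assoc, D.antipode_tinv]; rfl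

lemma range_sigmaEps_le_B : LinearMap.range D.sigmaEps ≤ Subalgebra.toSubmodule D.B :=
  range_le_of_forall_tmul_mem fun x y ↦ Algebra.subset_adjoin (Or.inl ⟨(x, y), rfl⟩)

lemma range_sigmaEpsInv_le_B : LinearMap.range D.sigmaEpsInv ≤ Subalgebra.toSubmodule D.B :=
  range_le_of_forall_tmul_mem fun x y ↦ Algebra.subset_adjoin (Or.inr ⟨(x, y), rfl⟩)

variable [IsCocomm k H]

lemma comul_comp_tinv : comul ∘ₗ D.tinv = map D.tinv D.tinv ∘ₗ comul := by
  rw [D.comul_tinv]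
  congr 1
  exact comm_comp_comul k H

def tinvCoalgHom : H →ₗc[k] T where
  toLinearMap := D.tinv
  counit_comp := D.counit_tinv
  map_comp_comul := D.comul_comp_tinv.symm

lemma comul_comp_sigmaEps : comul ∘ₗ D.sigmaEps = map D.sigmaEps D.sigmaEps ∘ₗ comul :=
  (((Bialgebra.mulCoalgHom k T).comp (Coalgebra.TensorProduct.map D.tCoalgHom D.tCoalgHom)).convMul
    (D.tinvCoalgHom.comp (Bialgebra.mulCoalgHom k H))).map_comp_comul.symm

lemma comul_comp_sigmaEpsInv :
    comul ∘ₗ D.sigmaEpsInv = map D.sigmaEpsInv D.sigmaEpsInv ∘ₗ comul :=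
  ((D.tCoalgHom.comp (Bialgebra.mulCoalgHom k H)).convMul ((Bialgebra.mulCoalgHom k T).comp
    (Coalgebra.TensorProduct.map D.tinvCoalgHom D.tinvCoalgHom))).map_comp_comul.symm

lemma antipode_comp_sigmaEps : antipode k ∘ₗ D.sigmaEps = D.sigmaEpsInv := by
  calc antipode k ∘ₗ D.sigmaEps
      = (toConv (antipode k ∘ₗ D.tt) * toConv (antipode k ∘ₗ D.tinvMul)).ofConv :=
        LinearMap.algHom_comp_convMul_distrib (antipodeAlgHom k T) (toConv D.tt) (toConv D.tinvMul)
    _ = (toConv D.tMul * toConv D.tinvtinv).ofConv := by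
        rw [antipode_comp_tt, antipode_comp_tinvMul, mul_comm]
    _ = D.sigmaEpsInv := rfl

lemma antipode_comp_sigmaEpsInv : antipode k ∘ₗ D.sigmaEpsInv = D.sigmaEps := by
  calc antipode k ∘ₗ D.sigmaEpsInv
      = (toConv (antipode k ∘ₗ D.tMul) * toConv (antipode k ∘ₗ D.tinvtinv)).ofConv :=
        LinearMap.algHom_comp_convMul_distrib (antipodeAlgHom k T) (toConv D.tMul)
          (toConv D.tinvtinv)
    _ = (toConv D.tt * toConv D.tinvMul).ofConv := by
        rw [antipode_comp_tMul, antipode_comp_tinvtinv, mul_comm]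
    _ = D.sigmaEps := rfl

lemma antipode_mem_B {b : T} (hb : b ∈ D.B) : antipode k b ∈ D.B := by
  refine antipode_mem_adjoin ?_ hb
  rintro _ (⟨p, rfl⟩ | ⟨p, rfl⟩)
  · rw [← LinearMap.comp_apply, antipode_comp_sigmaEps]
    exact D.range_sigmaEpsInv_le_B ⟨_, rfl⟩
  · rw [← LinearMap.comp_apply, antipode_comp_sigmaEpsInv]
    exact D.range_sigmaEps_le_B ⟨_, rfl⟩

lemma comul_mem_range_mapIncl_B {b : T} (hb : b ∈ D.B) :
    comul b ∈
      LinearMap.range (mapIncl (Subalgebra.toSubmodule D.B) (Subalgebra.toSubmodule D.B)) := by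
  refine Bialgebra.comul_mem_range_mapIncl_adjoin ?_ hb
  rintro _ (⟨p, rfl⟩ | ⟨p, rfl⟩)
  · exact Bialgebra.comul_apply_mem_range_mapIncl D.range_sigmaEps_le_B D.comul_comp_sigmaEps _
  · exact Bialgebra.comul_apply_mem_range_mapIncl D.range_sigmaEpsInv_le_B
      D.comul_comp_sigmaEpsInv _

end TakData

/-- For a cocommutative Hopf algebra `H`, the generic base algebra `B_H`
is a Hopf subalgebra of `S(t_H)_Θ`: one has `Δ(σ(x,y)) = σ(x₁,y₁) ⊗ σ(x₂,y₂)`,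
`Δ(σ⁻¹(x,y)) = σ⁻¹(x₁,y₁) ⊗ σ⁻¹(x₂,y₂)`, `S(σ(x,y)) = σ⁻¹(x,y)`, `S(σ⁻¹(x,y)) = σ(x,y)`,
and `B_H` is stable under comultiplication and the antipode. -/
theorem genBase_is_Hopf_subalgebra_of_cocommutative
    {H : Type} [Ring H] [HopfAlgebra k H]
    {T : Type} [CommRing T] [HopfAlgebra k T] (D : TakData k H T)
    (hcocomm : (TensorProduct.comm k H H).toLinearMap ∘ₗ Coalgebra.comul
      = (Coalgebra.comul : H →ₗ[k] H ⊗[k] H)) :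
    (Coalgebra.comul ∘ₗ D.sigmaEps
      = TensorProduct.map D.sigmaEps D.sigmaEps ∘ₗ Coalgebra.comul) ∧
    (Coalgebra.comul ∘ₗ D.sigmaEpsInv
      = TensorProduct.map D.sigmaEpsInv D.sigmaEpsInv ∘ₗ Coalgebra.comul) ∧
    (HopfAlgebra.antipode (R := k) ∘ₗ D.sigmaEps = D.sigmaEpsInv) ∧
    (HopfAlgebra.antipode (R := k) ∘ₗ D.sigmaEpsInv = D.sigmaEps) ∧
    (∀ b ∈ D.B, HopfAlgebra.antipode (R := k) b ∈ D.B) ∧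
    (∀ b ∈ D.B,
      Coalgebra.comul (R := k) b ∈
        LinearMap.range
          (TensorProduct.map (Subalgebra.toSubmodule D.B).subtype
            (Subalgebra.toSubmodule D.B).subtype)) := by
  have : IsCocomm k H := ⟨hcocomm⟩
  exact ⟨D.comul_comp_sigmaEps, D.comul_comp_sigmaEpsInv, D.antipode_comp_sigmaEps,
    D.antipode_comp_sigmaEpsInv, fun _ ↦ D.antipode_mem_B, fun _ ↦ D.comul_mem_range_mapIncl_B⟩
end
end
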